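/- Let a > 0 be a real constant, let n ∈ ℕ, and let g : ℝ → ℝ be given by an everywhere-convergent power series, g(x) = Σ_{i=0}^{∞} cᵢ xⁱ for all x ∈ ℝ (so that cᵢ = g⁽ⁱ⁾(0)/i! = G(i)). Define f(t) = (dⁿ/dtⁿ) g(t − a), the n-th derivative of the shifted function t ↦ g(t−a). Then for every k ∈ ℕ the series Σ_{i=k+n}^{∞} (−1)^{i−k−n} · C(i,k+n) · a^{i−k−n} · G(i) converges and the differential transformation of f at 0 satisfies F(k) = ((k+n)!/k!) · Σ_{i=k+n}^{∞} (−1)^{i−k−n} · C(i,k+n) · a^{i−k−n} · cᵢ, where C(i,j) denotes the binomial coefficient. -/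

import Mathlib

/-!
Expanding `g(y + h) = Σᵢ cᵢ (y + h)ⁱ` binomially gives a double series that converges absolutely,
since its absolute values sum to `Σᵢ |cᵢ| (|y| + |h|)ⁱ < ∞`. Summing it by powers of `y` instead
shows that `g(· + h)` is again an entire power series, whose `m`-th coefficient is
`Σⱼ C(m + j, m) hʲ c_{m+j}`; as for any power series, its `m`-th derivative at `0` is `m!` times
that coefficient. For `f = (g(· - a))⁽ⁿ⁾` one has `f⁽ᵏ⁾(0) = (g(· - a))⁽ᵏ⁺ⁿ⁾(0)`, which gives the
formula with `h = -a` and `m = k + n`.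
-/

open Finset FormalMultilinearSeries
open scoped Nat NNReal

theorem summable_iff_summable_sum_antidiagonal_of_nonneg {A : Type*} [AddCommMonoid A]
    [HasAntidiagonal A] {f : A × A → ℝ} (hf : 0 ≤ f) :
    Summable f ↔ Summable fun n => ∑ q ∈ antidiagonal n, f q := by
  rw [← HasAntidiagonal.sigmaAntidiagonalEquivProd.summable_iff,
    summable_sigma_of_nonneg (f := f ∘ HasAntidiagonal.sigmaAntidiagonalEquivProd) fun _ => hf _]
  simp [(hasSum_fintype _).summable, sum_attach _ fun q => f q]

theorem HasSum.sum_antidiagonal {A α : Type*} [AddCommMonoid A] [HasAntidiagonal A]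
    [AddCommMonoid α] [TopologicalSpace α] [ContinuousAdd α] [RegularSpace α]
    {f : A × A → α} {a : α} (hf : HasSum f a) :
    HasSum (fun n => ∑ q ∈ antidiagonal n, f q) a :=
  (HasAntidiagonal.sigmaAntidiagonalEquivProd.hasSum_iff.mpr hf).sigma
    fun n => (antidiagonal n).hasSum f

theorem mul_add_pow_eq_sum_antidiagonal {R : Type*} [CommSemiring R] (c : ℕ → R) (x y : R)
    (i : ℕ) : c i * (x + y) ^ i =
      ∑ q ∈ antidiagonal i, c (q.1 + q.2) * (q.1 + q.2).choose q.1 * y ^ q.2 * x ^ q.1 := by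
  rw [(Commute.all x y).add_pow', mul_sum]
  refine sum_congr rfl fun q hq => ?_
  rw [mem_antidiagonal.mp hq, nsmul_eq_mul]
  ring

theorem iteratedDeriv_iteratedDeriv {𝕜 F : Type*} [NontriviallyNormedField 𝕜]
    [NormedAddCommGroup F] [NormedSpace 𝕜 F] (k n : ℕ) (f : 𝕜 → F) :
    iteratedDeriv k (iteratedDeriv n f) = iteratedDeriv (k + n) f := by
  simp only [iteratedDeriv_eq_iterate, Function.iterate_add_apply]

section

variable {𝕜 : Type*} [RCLike 𝕜] {c : ℕ → 𝕜} {g : 𝕜 → 𝕜}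

theorem FormalMultilinearSeries.ofScalars_radius_eq_top_of_forall_summable
    (hc : ∀ x : 𝕜, Summable fun i => c i * x ^ i) : (ofScalars 𝕜 c).radius = ⊤ := by
  refine ENNReal.eq_top_of_forall_nnreal_le fun r =>
    (ofScalars 𝕜 c).le_radius_of_tendsto (l := 0) ?_
  simpa [ofScalars_norm] using (hc ((r : ℝ) : 𝕜)).tendsto_atTop_zero.norm

theorem summable_norm_mul_pow_of_forall_summable (hc : ∀ x : 𝕜, Summable fun i => c i * x ^ i)
    (r : ℝ≥0) : Summable fun i => ‖c i‖ * (r : ℝ) ^ i := by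
  simpa [ofScalars_norm] using (ofScalars 𝕜 c).summable_norm_mul_pow
    (by rw [ofScalars_radius_eq_top_of_forall_summable hc]; exact ENNReal.coe_lt_top)

theorem hasFPowerSeriesOnBall_ofScalars_of_forall_hasSum
    (hg : ∀ x, HasSum (fun i => c i * x ^ i) (g x)) :
    HasFPowerSeriesOnBall g (ofScalars 𝕜 c) 0 ⊤ where
  r_le := (ofScalars_radius_eq_top_of_forall_summable fun x => (hg x).summable).ge
  r_pos := ENNReal.zero_lt_top
  hasSum _ := by simpa [ofScalars_apply_eq, mul_comm] using hg _

theorem iteratedDeriv_zero_eq_factorial_mul_of_forall_hasSum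
    (hg : ∀ x, HasSum (fun i => c i * x ^ i) (g x)) (m : ℕ) :
    iteratedDeriv m g 0 = m ! * c m := by
  have := (hasFPowerSeriesOnBall_ofScalars_of_forall_hasSum hg).factorial_smul 1 m
  simpa [ofScalars_apply_eq, iteratedDeriv_eq_iteratedFDeriv] using this.symm

theorem hasSum_choose_mul_pow_mul_pow_of_forall_hasSum
    (hg : ∀ x, HasSum (fun i => c i * x ^ i) (g x)) (y h : 𝕜) :
    HasSum (fun q : ℕ × ℕ => c (q.1 + q.2) * (q.1 + q.2).choose q.1 * h ^ q.2 * y ^ q.1)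
      (g (y + h)) := by
  set F : ℕ × ℕ → 𝕜 := fun q => c (q.1 + q.2) * (q.1 + q.2).choose q.1 * h ^ q.2 * y ^ q.1
  have hF : Summable fun q => ‖F q‖ := by
    rw [summable_iff_summable_sum_antidiagonal_of_nonneg fun _ => norm_nonneg _]
    have hfiber (i : ℕ) : ∑ q ∈ antidiagonal i, ‖F q‖ = ‖c i‖ * (‖y‖₊ + ‖h‖₊ : ℝ≥0) ^ i := by
      simp [mul_add_pow_eq_sum_antidiagonal (fun i => ‖c i‖), F]
    simpa only [hfiber] using
      summable_norm_mul_pow_of_forall_summable (fun x => (hg x).summable) (‖y‖₊ + ‖h‖₊)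
  obtain ⟨T, hT⟩ := hF.of_norm
  have hrows := hT.sum_antidiagonal
  simp only [F, ← mul_add_pow_eq_sum_antidiagonal] at hrows
  rwa [hrows.unique (hg (y + h))] at hT

noncomputable def shiftedCoeff (c : ℕ → 𝕜) (h : 𝕜) (m : ℕ) : 𝕜 :=
  ∑' j, c (m + j) * (m + j).choose m * h ^ j

theorem hasSum_shiftedCoeff (hg : ∀ x, HasSum (fun i => c i * x ^ i) (g x)) (h : 𝕜) (m : ℕ) :
    HasSum (fun j => c (m + j) * (m + j).choose m * h ^ j) (shiftedCoeff c h m) := by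
  simpa [shiftedCoeff] using
    ((hasSum_choose_mul_pow_mul_pow_of_forall_hasSum hg 1 h).summable.prod_factor m).hasSum

theorem hasSum_shiftedCoeff_mul_pow (hg : ∀ x, HasSum (fun i => c i * x ^ i) (g x)) (h y : 𝕜) :
    HasSum (fun m => shiftedCoeff c h m * y ^ m) (g (y + h)) :=
  (hasSum_choose_mul_pow_mul_pow_of_forall_hasSum hg y h).prod_fiberwise fun m =>
    (hasSum_shiftedCoeff hg h m).mul_right _

end

theorem stmt_4_general (a : ℝ) (n : ℕ) (c : ℕ → ℝ) (g : ℝ → ℝ)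
    (hg : ∀ x : ℝ, HasSum (fun i : ℕ => c i * x ^ i) (g x)) (k : ℕ) :
    ∃ S : ℝ,
      HasSum
        (fun j : ℕ =>
          (-1 : ℝ) ^ j * (Nat.choose (k + n + j) (k + n) : ℝ) * a ^ j * c (k + n + j)) S ∧
      iteratedDeriv k (fun t => iteratedDeriv n (fun s => g (s - a)) t) 0 /
          (Nat.factorial k : ℝ) =
        ((Nat.factorial (k + n) : ℝ) / (Nat.factorial k : ℝ)) * S := by
  refine ⟨shiftedCoeff c (-a) (k + n), ?_, ?_⟩
  · have hterm (j : ℕ) : (-1 : ℝ) ^ j * (k + n + j).choose (k + n) * a ^ j * c (k + n + j) =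
        c (k + n + j) * (k + n + j).choose (k + n) * (-a) ^ j := by
      rw [neg_pow]
      ring
    simpa only [hterm] using hasSum_shiftedCoeff hg (-a) (k + n)
  · have hshift (y : ℝ) : HasSum (fun m => shiftedCoeff c (-a) m * y ^ m) (g (y - a)) := by
      simpa only [sub_eq_add_neg] using hasSum_shiftedCoeff_mul_pow hg (-a) y
    rw [iteratedDeriv_iteratedDeriv, iteratedDeriv_zero_eq_factorial_mul_of_forall_hasSum hshift,
      mul_div_right_comm]

/-- Differential transformation of the n-th derivative of a shifted function:
if `g(x) = Σ_{i=0}^∞ cᵢ xⁱ` for all `x ∈ ℝ` and `f(t) = (dⁿ/dtⁿ) g(t−a)` with `a > 0`,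
then for every `k` the series `Σ_{i=k+n}^∞ (−1)^{i−k−n} C(i,k+n) a^{i−k−n} cᵢ`
(written with index `i = (k+n) + j`) converges, with sum `S`, and
`F(k) = f⁽ᵏ⁾(0)/k! = ((k+n)!/k!) · S`. -/
theorem stmt_4 (a : ℝ) (ha : 0 < a) (n : ℕ) (c : ℕ → ℝ) (g : ℝ → ℝ)
    (hg : ∀ x : ℝ, HasSum (fun i : ℕ => c i * x ^ i) (g x)) (k : ℕ) :
    ∃ S : ℝ,
      HasSum
        (fun j : ℕ =>
          (-1 : ℝ) ^ j * (Nat.choose (k + n + j) (k + n) : ℝ) * a ^ j * c (k + n + j)) S ∧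
      iteratedDeriv k (fun t => iteratedDeriv n (fun s => g (s - a)) t) 0 /
          (Nat.factorial k : ℝ) =
        ((Nat.factorial (k + n) : ℝ) / (Nat.factorial k : ℝ)) * S :=
  stmt_4_general a n c g hg k
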